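/- arXiv:2101.01100 — 4 statements merged into one kernel-verified Lean document; each statement's English description precedes it below -/
import Mathlib

section
/- Let G = (V,E) be a D-regular graph on n vertices, k > 0, and let φ be the edge-indicator embedding satisfying ⟨φ(i,v),φ(i',v')⟩ = 1[(v,v') ∈ E] for i ≠ i' and ‖φ(i,v)‖₂² = D(k-1). For any vertices j_1, …, j_k (not necessarily distinct), min over y ∈ R^d of ∑_{i=1}^k ‖φ(i,j_i) - y‖₂² equals D(k-1)² - (2/k)·|E(j_1,…,j_k)|, where |E(j_1,…,j_k)| = ∑_{i < i'} 1[(j_i, j_{i'}) ∈ E] counts edges of the induced multiset with multiplicity. -/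
/-!
Minimizing `∑ᵢ ‖xᵢ - y‖²` over `y` gives the centroid, with minimum
`∑ᵢ ‖xᵢ‖² - ‖∑ᵢ xᵢ‖² / k`. For `xᵢ = φ(i, jᵢ)` the Gram matrix has diagonal `D(k-1)`, since the
support of `φ(i, v)` consists of the edges from `(i, v)` to the `k - 1` other layers, and
off-diagonal entries `1[(jᵢ, jᵢ') ∈ E]`; hence `‖∑ᵢ xᵢ‖² = kD(k-1) + 2|E(j₁,…,j_k)|`.
-/

/-- Index set for the coordinates of the edge-indicator embedding:
    tuples (ℓ, u, ℓ', u') with ℓ < ℓ' in [k] and u, u' vertices. -/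
abbrev EmbIdx (k : ℕ) (V : Type*) := {σ : Fin k × V × Fin k × V // σ.1 < σ.2.2.1}

/-- The edge-indicator embedding φ : [k] × V → {0,1}^d of a graph G, with
    [φ(i,v)]_{(ℓ,u,ℓ',u')} = 1 iff (u,u') ∈ E and ((ℓ,u) = (i,v) or (ℓ',u') = (i,v)). -/
def Emb {V : Type*} (G : SimpleGraph V) [DecidableRel G.Adj] [DecidableEq V]
    (k : ℕ) (i : Fin k) (v : V) : EmbIdx k V → ℝ :=
  fun σ =>
    if G.Adj σ.1.2.1 σ.1.2.2.2 ∧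
        ((σ.1.1, σ.1.2.1) = (i, v) ∨ (σ.1.2.2.1, σ.1.2.2.2) = (i, v)) then 1 else 0

open Finset

theorem sum_sq_sub_eq {ι : Type*} [Fintype ι] [Nonempty ι] (a : ι → ℝ) (t : ℝ) :
    ∑ i, (a i - t) ^ 2 = ∑ i, a i ^ 2 - (∑ i, a i) ^ 2 / Fintype.card ι
      + Fintype.card ι * (t - (∑ i, a i) / Fintype.card ι) ^ 2 := by
  have hcard : (Fintype.card ι : ℝ) ≠ 0 := by positivity
  simp only [sub_sq, sum_add_distrib, sum_sub_distrib, ← sum_mul, ← mul_sum, sum_const,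
    card_univ, nsmul_eq_mul]
  field_simp
  ring

theorem isLeast_sum_sum_sq_sub {ι σ : Type*} [Fintype ι] [Nonempty ι] [Fintype σ]
    (x : ι → σ → ℝ) :
    IsLeast {c : ℝ | ∃ y : σ → ℝ, c = ∑ i, ∑ s, (x i s - y s) ^ 2}
      (∑ i, ∑ s, x i s ^ 2 - (∑ s, (∑ i, x i s) ^ 2) / Fintype.card ι) := by
  have hsum (y : σ → ℝ) : ∑ i, ∑ s, (x i s - y s) ^ 2
      = ∑ i, ∑ s, x i s ^ 2 - (∑ s, (∑ i, x i s) ^ 2) / Fintype.card ι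
        + ∑ s, Fintype.card ι * (y s - (∑ i, x i s) / Fintype.card ι) ^ 2 := by
    rw [sum_comm, sum_comm (f := fun i s => x i s ^ 2), sum_div, ← sum_sub_distrib,
      ← sum_add_distrib]
    exact sum_congr rfl fun s _ => sum_sq_sub_eq (x · s) (y s)
  refine ⟨⟨fun s => (∑ i, x i s) / Fintype.card ι, by simp [hsum]⟩, ?_⟩
  rintro c ⟨y, rfl⟩
  rw [hsum]
  exact le_add_of_nonneg_right (sum_nonneg fun s _ => by positivity)

theorem sum_sum_eq_two_mul_sum_lt {ι R : Type*} [Fintype ι] [LinearOrder ι] [CommSemiring R]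
    (f : ι → ι → R)
    (hsymm : ∀ i i', f i i' = f i' i) (hdiag : ∀ i, f i i = 0) :
    ∑ i, ∑ i', f i i' = 2 * ∑ p ∈ univ.filter (fun p : ι × ι => p.1 < p.2), f p.1 p.2 := by
  have hsplit (p : ι × ι) : f p.1 p.2
      = (if p.1 < p.2 then f p.1 p.2 else 0) + (if p.2 < p.1 then f p.2 p.1 else 0) := by
    rcases lt_trichotomy p.1 p.2 with h | h | h
    · simp [h, h.not_gt]
    · simp [h, hdiag]
    · simp [h, h.not_gt, hsymm]
  have hswap : ∑ p : ι × ι, (if p.2 < p.1 then f p.2 p.1 else 0)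
      = ∑ p : ι × ι, (if p.1 < p.2 then f p.1 p.2 else 0) :=
    Fintype.sum_equiv (Equiv.prodComm ι ι) _ _ fun p => rfl
  rw [← Fintype.sum_prod_type', sum_congr rfl fun p _ => hsplit p, sum_add_distrib, hswap,
    sum_filter]
  ring

theorem sum_embIdx {k : ℕ} {V : Type*} [Fintype V] (f : Fin k × V × Fin k × V → ℝ) :
    ∑ σ : EmbIdx k V, f σ.1
      = ∑ l, ∑ u, ∑ l', ∑ u', if l < l' then f (l, u, l', u') else 0 := by
  rw [← sum_subtype (univ.filter fun t : Fin k × V × Fin k × V => t.1 < t.2.2.1) (by simp) f,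
    sum_filter]
  simp only [Fintype.sum_prod_type]

section EmbIdx

variable {k : ℕ} {V : Type*} [Fintype V] [DecidableEq V] (i : Fin k) (v : V)

theorem sum_embIdx_left_eq (g : Fin k × V → ℝ) :
    ∑ σ : EmbIdx k V, (if σ.1.1 = i ∧ σ.1.2.1 = v then g σ.1.2.2 else 0)
      = ∑ l', ∑ u', if i < l' then g (l', u') else 0 := by
  rw [sum_embIdx fun t => if t.1 = i ∧ t.2.1 = v then g t.2.2 else 0,
    Fintype.sum_eq_single i fun l hl => by simp [hl],
    Fintype.sum_eq_single v fun u hu => by simp [hu]]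
  simp

theorem sum_embIdx_right_eq (g : Fin k × V → ℝ) :
    ∑ σ : EmbIdx k V, (if σ.1.2.2.1 = i ∧ σ.1.2.2.2 = v then g (σ.1.1, σ.1.2.1) else 0)
      = ∑ l, ∑ u, if l < i then g (l, u) else 0 := by
  rw [sum_embIdx fun t => if t.2.2.1 = i ∧ t.2.2.2 = v then g (t.1, t.2.1) else 0]
  refine sum_congr rfl fun l _ => sum_congr rfl fun u _ => ?_
  rw [Fintype.sum_eq_single i fun l hl => by simp [hl],
    Fintype.sum_eq_single v fun u hu => by simp [hu]]
  simp

end EmbIdx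

section Embedding

variable {V : Type*} [DecidableEq V] (G : SimpleGraph V) [DecidableRel G.Adj] {k : ℕ}

theorem emb_mul_self (i : Fin k) (v : V) (σ : EmbIdx k V) :
    Emb G k i v σ * Emb G k i v σ = Emb G k i v σ := by
  unfold Emb; split_ifs <;> norm_num

/-- The two alternatives in the definition of `Emb` exclude each other because `ℓ < ℓ'`. -/
theorem emb_eq_add (i : Fin k) (v : V) (σ : EmbIdx k V) :
    Emb G k i v σ
      = (if σ.1.1 = i ∧ σ.1.2.1 = v then if G.Adj v σ.1.2.2.2 then 1 else 0 else 0)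
        + (if σ.1.2.2.1 = i ∧ σ.1.2.2.2 = v then if G.Adj σ.1.2.1 v then 1 else 0 else 0) := by
  obtain ⟨⟨l, u, l', u'⟩, hlt : l < l'⟩ := σ
  unfold Emb
  split_ifs <;> grind

theorem emb_mul_emb_of_lt {i i' : Fin k} (hii : i < i') (v v' : V) (σ : EmbIdx k V) :
    Emb G k i v σ * Emb G k i' v' σ
      = if σ = ⟨(i, v, i', v'), hii⟩ ∧ G.Adj v v' then 1 else 0 := by
  obtain ⟨⟨l, u, l', u'⟩, hlt : l < l'⟩ := σ
  unfold Emb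
  split_ifs <;> grind

variable [Fintype V]

theorem inner_emb_of_lt {i i' : Fin k} (hii : i < i') (v v' : V) :
    ∑ σ, Emb G k i v σ * Emb G k i' v' σ = if G.Adj v v' then 1 else 0 := by
  simp_rw [emb_mul_emb_of_lt G hii, ite_and, sum_ite_eq']
  simp

theorem inner_emb_of_ne {i i' : Fin k} (hii : i ≠ i') (v v' : V) :
    ∑ σ, Emb G k i v σ * Emb G k i' v' σ = if G.Adj v v' then 1 else 0 := by
  rcases hii.lt_or_gt with h | h
  · exact inner_emb_of_lt G h v v'
  · simp_rw [mul_comm (Emb G k i v _), inner_emb_of_lt G h v' v, G.adj_comm]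

theorem inner_emb_self {D : ℕ} (hreg : G.IsRegularOfDegree D) (i : Fin k) (v : V) :
    ∑ σ, Emb G k i v σ * Emb G k i v σ = ((k : ℝ) - 1) * D := by
  have hdeg (w : V) : ∑ u, (if G.Adj w u then (1 : ℝ) else 0) = D := by
    rw [sum_boole, ← SimpleGraph.neighborFinset_eq_filter, G.card_neighborFinset_eq_degree,
      hreg w]
  simp_rw [emb_mul_self, emb_eq_add, sum_add_distrib]
  rw [sum_embIdx_left_eq i v fun p => if G.Adj v p.2 then 1 else 0,
    sum_embIdx_right_eq i v fun p => if G.Adj p.2 v then 1 else 0]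
  simp only [G.adj_comm _ v, sum_ite_irrel, sum_const_zero, hdeg, ← sum_add_distrib]
  have hsplit (l : Fin k) : (if i < l then (D : ℝ) else 0) + (if l < i then (D : ℝ) else 0)
      = if l ≠ i then (D : ℝ) else 0 := by
    rcases lt_trichotomy i l with h | rfl | h
    · simp [h, h.ne', h.not_gt]
    · simp
    · simp [h, h.ne, h.not_gt]
  simp only [hsplit, sum_ite, sum_const, nsmul_eq_mul, mul_zero, add_zero, filter_ne',
    card_erase_of_mem (mem_univ i), card_univ, Fintype.card_fin, Nat.cast_sub i.pos, Nat.cast_one]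

end Embedding

theorem stmt7_general {V : Type*} [Fintype V] [DecidableEq V] (G : SimpleGraph V)
    [DecidableRel G.Adj] (D k : ℕ)
    (hreg : G.IsRegularOfDegree D) (hk : 0 < k) (j : Fin k → V) :
    IsLeast
      {c : ℝ | ∃ y : EmbIdx k V → ℝ,
        c = ∑ i, ∑ σ : EmbIdx k V, (Emb G k i (j i) σ - y σ) ^ 2}
      ((D : ℝ) * ((k : ℝ) - 1) ^ 2
        - (2 / (k : ℝ)) *
          ∑ pr ∈ Finset.univ.filter (fun pr : Fin k × Fin k => pr.1 < pr.2),
            (if G.Adj (j pr.1) (j pr.2) then (1 : ℝ) else 0)) := by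
  have : Nonempty (Fin k) := ⟨⟨0, hk⟩⟩
  have hgram (i i' : Fin k) : ∑ σ, Emb G k i (j i) σ * Emb G k i' (j i') σ
      = (if G.Adj (j i) (j i') then 1 else 0) + if i = i' then ((k : ℝ) - 1) * D else 0 := by
    by_cases h : i = i'
    · subst h; simp [inner_emb_self G hreg]
    · simp [h, inner_emb_of_ne G h]
  have hnorms : ∑ i, ∑ σ, Emb G k i (j i) σ ^ 2 = k * (((k : ℝ) - 1) * D) := by
    simp [sq, hgram]
  have hsum : ∑ σ, (∑ i, Emb G k i (j i) σ) ^ 2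
      = 2 * ∑ pr ∈ univ.filter (fun pr : Fin k × Fin k => pr.1 < pr.2),
          (if G.Adj (j pr.1) (j pr.2) then (1 : ℝ) else 0) + k * (((k : ℝ) - 1) * D) := by
    simp_rw [sq, sum_mul_sum]
    rw [sum_comm]
    simp_rw [sum_comm (s := (univ : Finset (EmbIdx k V))), hgram, sum_add_distrib]
    rw [sum_sum_eq_two_mul_sum_lt (fun i i' => if G.Adj (j i) (j i') then (1 : ℝ) else 0)
      (fun i i' => by simp [G.adj_comm]) (fun i => by simp)]
    simp
  convert isLeast_sum_sum_sq_sub (fun i => Emb G k i (j i)) using 1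
  rw [Fintype.card_fin, hnorms, hsum]
  field_simp
  ring

/-- For a D-regular graph G and any tuple of (not necessarily distinct) vertices
    j₁, …, j_k, min_y ∑ᵢ ‖φ(i,jᵢ) - y‖₂² = D(k-1)² - (2/k)·|E(j₁,…,j_k)|, where
    |E(j₁,…,j_k)| counts edges of the induced multiset with multiplicity. -/
theorem stmt7 {V : Type*} [Fintype V] [DecidableEq V] (G : SimpleGraph V)
    [DecidableRel G.Adj] (n D k : ℕ) (hn : Fintype.card V = n)
    (hreg : G.IsRegularOfDegree D) (hk : 0 < k) (j : Fin k → V) :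
    IsLeast
      {c : ℝ | ∃ y : EmbIdx k V → ℝ,
        c = ∑ i, ∑ σ : EmbIdx k V, (Emb G k i (j i) σ - y σ) ^ 2}
      ((D : ℝ) * ((k : ℝ) - 1) ^ 2
        - (2 / (k : ℝ)) *
          ∑ pr ∈ Finset.univ.filter (fun pr : Fin k × Fin k => pr.1 < pr.2),
            (if G.Adj (j pr.1) (j pr.2) then (1 : ℝ) else 0)) :=
  stmt7_general G D k hreg hk j
end

section
/- Let G = (V,E) be a D-regular graph on n vertices, k > 0, φ the edge-indicator embedding, and M = D(k-1)². If G contains a k-clique then the minimum over tuples (j_1,…,j_k) ∈ V^k of min_y ∑_{i=1}^k ‖φ(i,j_i) - y‖₂² equals M - k + 1; if G contains no k-clique then this minimum is at least M - k + 1 + 2/k. In particular, computing this minimum to additive error less than 1/k decides whether G contains a k-clique. -/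
section Aux
set_option linter.unusedSectionVars false
variable {V : Type*} [Fintype V] [DecidableEq V] (G : SimpleGraph V) [DecidableRel G.Adj]
  (k : ℕ) (j : Fin k → V) {D : ℕ}

noncomputable def Tval : ℝ :=
  ∑ ℓ : Fin k, ∑ ℓ' : Fin k,
    if ℓ < ℓ' then (if G.Adj (j ℓ) (j ℓ') then (1:ℝ) else 0) else 0

noncomputable def Pval (k : ℕ) : ℝ :=
  ∑ ℓ : Fin k, ∑ ℓ' : Fin k, if ℓ < ℓ' then (1:ℝ) else 0

lemma deg_sum (hreg : G.IsRegularOfDegree D) (v : V) :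
    ∑ u : V, (if G.Adj v u then (1:ℝ) else 0) = D := by
  rw [Finset.sum_boole]
  norm_num
  rw [← SimpleGraph.neighborFinset_eq_filter, ← SimpleGraph.degree, hreg v]

lemma deg_sum' (hreg : G.IsRegularOfDegree D) (v : V) :
    ∑ u : V, (if G.Adj u v then (1:ℝ) else 0) = D := by
  rw [← deg_sum G hreg v]
  simp only [G.adj_comm]

/-- inner double sums for fixed ℓ < ℓ' -/
lemma inner1 (hreg : G.IsRegularOfDegree D) (a b : V) :
    ∑ u : V, ∑ u' : V,
      (if G.Adj u u' then ((if u = a then (1:ℝ) else 0) + (if u' = b then 1 else 0)) else 0)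
      = 2 * D := by
  have hpt : ∀ u u' : V,
      (if G.Adj u u' then ((if u = a then (1:ℝ) else 0) + (if u' = b then 1 else 0)) else 0)
      = (if u = a then (if G.Adj u u' then (1:ℝ) else 0) else 0)
        + (if u' = b then (if G.Adj u u' then (1:ℝ) else 0) else 0) := by
    intro u u'; split_ifs <;> norm_num
  simp only [hpt, Finset.sum_add_distrib]
  have h1 : ∑ u : V, ∑ u' : V, (if u = a then (if G.Adj u u' then (1:ℝ) else 0) else 0) = D := by
    have : ∀ u : V, ∑ u' : V, (if u = a then (if G.Adj u u' then (1:ℝ) else 0) else 0)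
        = if u = a then (D:ℝ) else 0 := by
      intro u
      split_ifs with h
      · exact deg_sum G hreg u ▸ rfl
      · simp
    rw [Finset.sum_congr rfl fun u _ => this u, Finset.sum_ite_eq' Finset.univ a]
    simp
  have h2 : ∑ u : V, ∑ u' : V, (if u' = b then (if G.Adj u u' then (1:ℝ) else 0) else 0) = D := by
    rw [Finset.sum_comm]
    have : ∀ u' : V, ∑ u : V, (if u' = b then (if G.Adj u u' then (1:ℝ) else 0) else 0)
        = if u' = b then (D:ℝ) else 0 := by
      intro u'
      split_ifs with h
      · exact deg_sum' G hreg u' ▸ rfl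
      · simp
    rw [Finset.sum_congr rfl fun u _ => this u, Finset.sum_ite_eq' Finset.univ b]
    simp
  rw [h1, h2]; ring

lemma inner2 (a b : V) :
    ∑ u : V, ∑ u' : V,
      (if G.Adj u u' then (2 * (if u = a then (1:ℝ) else 0) * (if u' = b then 1 else 0)) else 0)
      = 2 * (if G.Adj a b then (1:ℝ) else 0) := by
  have hpt : ∀ u u' : V,
      (if G.Adj u u' then (2 * (if u = a then (1:ℝ) else 0) * (if u' = b then 1 else 0)) else 0)
      = 2 * (if u = a then (if u' = b then (if G.Adj u u' then (1:ℝ) else 0) else 0) else 0) := by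
    intro u u'; split_ifs <;> norm_num
  simp only [hpt, ← Finset.mul_sum]
  congr 1
  have : ∀ u : V, ∑ u' : V, (if u = a then (if u' = b then (if G.Adj u u' then (1:ℝ) else 0) else 0) else 0)
      = if u = a then (if G.Adj u b then (1:ℝ) else 0) else 0 := by
    intro u
    by_cases h : u = a
    · subst h
      simp only [eq_self_iff_true, if_true]
      rw [Finset.sum_ite_eq' Finset.univ b]
      simp
    · simp [h]
  rw [Finset.sum_congr rfl fun u _ => this u, Finset.sum_ite_eq' Finset.univ a]
  simp

lemma sum_embidx (g : Fin k × V × Fin k × V → ℝ) :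
    ∑ σ : EmbIdx k V, g σ.1
      = ∑ ℓ : Fin k, ∑ u : V, ∑ ℓ' : Fin k, ∑ u' : V,
          if ℓ < ℓ' then g (ℓ, u, ℓ', u') else 0 := by
  classical
  rw [← Finset.sum_subtype (Finset.univ.filter (fun p : Fin k × V × Fin k × V => p.1 < p.2.2.1))
      (by simp) g]
  rw [Finset.sum_filter, Fintype.sum_prod_type]
  refine Finset.sum_congr rfl fun ℓ _ => ?_
  rw [Fintype.sum_prod_type]
  refine Finset.sum_congr rfl fun u _ => ?_
  rw [Fintype.sum_prod_type]

lemma S_pointwise (σ : EmbIdx k V) :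
    ∑ i, Emb G k i (j i) σ
      = if G.Adj σ.1.2.1 σ.1.2.2.2 then
          ((if σ.1.2.1 = j σ.1.1 then (1:ℝ) else 0)
            + (if σ.1.2.2.2 = j σ.1.2.2.1 then 1 else 0)) else 0 := by
  obtain ⟨⟨ℓ, u, ℓ', u'⟩, hlt⟩ := σ
  have hne : ℓ ≠ ℓ' := ne_of_lt hlt
  have hpt : ∀ i : Fin k, Emb G k i (j i) ⟨(ℓ, u, ℓ', u'), hlt⟩
      = (if i = ℓ then (if G.Adj u u' ∧ u = j ℓ then (1:ℝ) else 0) else 0)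
        + (if i = ℓ' then (if G.Adj u u' ∧ u' = j ℓ' then (1:ℝ) else 0) else 0) := by
    intro i
    simp only [Emb, Prod.mk.injEq]
    rcases eq_or_ne i ℓ with rfl | h1 <;> rcases eq_or_ne i ℓ' with rfl | h2
    · exact absurd rfl hne
    · simp [h2, Ne.symm h2]
    · simp [h1, Ne.symm h1]
    · simp [h1, h2, Ne.symm h1, Ne.symm h2]
  rw [Finset.sum_congr rfl (fun i _ => hpt i), Finset.sum_add_distrib,
    Finset.sum_ite_eq' Finset.univ ℓ, Finset.sum_ite_eq' Finset.univ ℓ']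
  simp only [Finset.mem_univ, if_true]
  by_cases hadj : G.Adj u u' <;> simp [hadj, eq_comm]

lemma sumS (hreg : G.IsRegularOfDegree D) :
    ∑ σ : EmbIdx k V, (∑ i, Emb G k i (j i) σ) = 2 * D * Pval k := by
  rw [Finset.sum_congr rfl fun σ _ => S_pointwise G k j σ]
  rw [sum_embidx k (fun p => if G.Adj p.2.1 p.2.2.2 then
      ((if p.2.1 = j p.1 then (1:ℝ) else 0) + (if p.2.2.2 = j p.2.2.1 then 1 else 0)) else 0)]
  have hswap : ∀ ℓ : Fin k, ∑ u : V, ∑ ℓ' : Fin k, ∑ u' : V,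
      (if ℓ < ℓ' then (if G.Adj u u' then
          ((if u = j ℓ then (1:ℝ) else 0) + (if u' = j ℓ' then 1 else 0)) else 0) else 0)
      = ∑ ℓ' : Fin k, ∑ u : V, ∑ u' : V,
      (if ℓ < ℓ' then (if G.Adj u u' then
          ((if u = j ℓ then (1:ℝ) else 0) + (if u' = j ℓ' then 1 else 0)) else 0) else 0) :=
    fun ℓ => Finset.sum_comm
  rw [Finset.sum_congr rfl fun ℓ _ => hswap ℓ]
  have hin : ∀ ℓ ℓ' : Fin k, ∑ u : V, ∑ u' : V,
      (if ℓ < ℓ' then (if G.Adj u u' then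
          ((if u = j ℓ then (1:ℝ) else 0) + (if u' = j ℓ' then 1 else 0)) else 0) else 0)
      = if ℓ < ℓ' then 2 * (D:ℝ) else 0 := by
    intro ℓ ℓ'
    by_cases h : ℓ < ℓ'
    · simp only [if_pos h]
      exact inner1 G hreg (j ℓ) (j ℓ')
    · simp [h]
  rw [Finset.sum_congr rfl fun ℓ _ => Finset.sum_congr rfl fun ℓ' _ => hin ℓ ℓ']
  rw [Pval, Finset.mul_sum]
  refine Finset.sum_congr rfl fun ℓ _ => ?_
  rw [Finset.mul_sum]
  refine Finset.sum_congr rfl fun ℓ' _ => ?_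
  split_ifs <;> ring

lemma sumS2 (hreg : G.IsRegularOfDegree D) :
    ∑ σ : EmbIdx k V, (∑ i, Emb G k i (j i) σ)^2
      = 2 * D * Pval k + 2 * Tval G k j := by
  have h1 : ∀ σ : EmbIdx k V, (∑ i, Emb G k i (j i) σ)^2
      = (fun p : Fin k × V × Fin k × V =>
          (if G.Adj p.2.1 p.2.2.2 then
            ((if p.2.1 = j p.1 then (1:ℝ) else 0) + (if p.2.2.2 = j p.2.2.1 then 1 else 0))
            else 0)^2) σ.1 := by
    intro σ; rw [S_pointwise G k j σ]
  rw [Finset.sum_congr rfl fun σ _ => h1 σ]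
  rw [sum_embidx k (fun p : Fin k × V × Fin k × V =>
      (if G.Adj p.2.1 p.2.2.2 then
        ((if p.2.1 = j p.1 then (1:ℝ) else 0) + (if p.2.2.2 = j p.2.2.1 then 1 else 0))
        else 0)^2)]
  have hswap : ∀ ℓ : Fin k, ∑ u : V, ∑ ℓ' : Fin k, ∑ u' : V,
      (if ℓ < ℓ' then ((if G.Adj u u' then
          ((if u = j ℓ then (1:ℝ) else 0) + (if u' = j ℓ' then 1 else 0)) else 0)^2) else 0)
      = ∑ ℓ' : Fin k, ∑ u : V, ∑ u' : V,
      (if ℓ < ℓ' then ((if G.Adj u u' then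
          ((if u = j ℓ then (1:ℝ) else 0) + (if u' = j ℓ' then 1 else 0)) else 0)^2) else 0) :=
    fun ℓ => Finset.sum_comm
  rw [Finset.sum_congr rfl fun ℓ _ => hswap ℓ]
  have hin : ∀ ℓ ℓ' : Fin k, ∑ u : V, ∑ u' : V,
      (if ℓ < ℓ' then ((if G.Adj u u' then
          ((if u = j ℓ then (1:ℝ) else 0) + (if u' = j ℓ' then 1 else 0)) else 0)^2) else 0)
      = if ℓ < ℓ' then (2 * (D:ℝ) + 2 * (if G.Adj (j ℓ) (j ℓ') then (1:ℝ) else 0)) else 0 := by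
    intro ℓ ℓ'
    by_cases h : ℓ < ℓ'
    · simp only [if_pos h]
      have hpt : ∀ u u' : V,
          ((if G.Adj u u' then
            ((if u = j ℓ then (1:ℝ) else 0) + (if u' = j ℓ' then 1 else 0)) else 0)^2)
          = (if G.Adj u u' then
              ((if u = j ℓ then (1:ℝ) else 0) + (if u' = j ℓ' then 1 else 0)) else 0)
            + (if G.Adj u u' then
              (2 * (if u = j ℓ then (1:ℝ) else 0) * (if u' = j ℓ' then 1 else 0)) else 0) := by
        intro u u'; split_ifs <;> norm_num
      rw [Finset.sum_congr rfl fun u _ => Finset.sum_congr rfl fun u' _ => hpt u u']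
      simp only [Finset.sum_add_distrib]
      rw [inner1 G hreg (j ℓ) (j ℓ'), inner2 G (j ℓ) (j ℓ')]
    · simp [h]
  rw [Finset.sum_congr rfl fun ℓ _ => Finset.sum_congr rfl fun ℓ' _ => hin ℓ ℓ']
  rw [Pval, Tval, Finset.mul_sum, Finset.mul_sum, ← Finset.sum_add_distrib]
  refine Finset.sum_congr rfl fun ℓ _ => ?_
  rw [Finset.mul_sum, Finset.mul_sum, ← Finset.sum_add_distrib]
  refine Finset.sum_congr rfl fun ℓ' _ => ?_
  split_ifs <;> ring

lemma Pval_eq : Pval k = ((k:ℝ)^2 - k)/2 := by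
  have h2 : Pval k + Pval k = (k:ℝ)^2 - k := by
    have hswap : Pval k = ∑ ℓ : Fin k, ∑ ℓ' : Fin k, if ℓ' < ℓ then (1:ℝ) else 0 := by
      rw [Pval, Finset.sum_comm]
    nth_rewrite 2 [hswap]
    rw [Pval, ← Finset.sum_add_distrib]
    have h : ∀ ℓ : Fin k, ((∑ ℓ' : Fin k, if ℓ < ℓ' then (1:ℝ) else 0)
        + ∑ ℓ' : Fin k, if ℓ' < ℓ then (1:ℝ) else 0)
        = ∑ ℓ' : Fin k, ((1:ℝ) - if ℓ = ℓ' then 1 else 0) := by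
      intro ℓ
      rw [← Finset.sum_add_distrib]
      apply Finset.sum_congr rfl
      intro ℓ' _
      rcases lt_trichotomy ℓ ℓ' with h | h | h
      · simp [h, not_lt.2 h.le, h.ne]
      · simp [h]
      · simp [h, not_lt.2 h.le, h.ne']
    rw [Finset.sum_congr rfl (fun ℓ _ => h ℓ)]
    simp [Finset.sum_sub_distrib, Finset.sum_ite_eq]
    ring
  linarith

lemma Tval_le_Pval : Tval G k j ≤ Pval k := by
  refine Finset.sum_le_sum fun ℓ _ => Finset.sum_le_sum fun ℓ' _ => ?_
  split_ifs <;> norm_num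

lemma Tval_eq_Pval (hadj : ∀ ℓ ℓ' : Fin k, ℓ < ℓ' → G.Adj (j ℓ) (j ℓ')) :
    Tval G k j = Pval k := by
  refine Finset.sum_congr rfl fun ℓ _ => Finset.sum_congr rfl fun ℓ' _ => ?_
  by_cases h : ℓ < ℓ' <;> simp [h, fun hh => hadj ℓ ℓ' hh]

lemma Tval_le_sub (a b : Fin k) (hab : a < b) (hnadj : ¬ G.Adj (j a) (j b)) :
    Tval G k j ≤ Pval k - 1 := by
  have hF : ∀ ℓ ℓ' : Fin k, (0:ℝ) ≤ (if ℓ < ℓ' then (1:ℝ) else 0)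
      - (if ℓ < ℓ' then (if G.Adj (j ℓ) (j ℓ') then (1:ℝ) else 0) else 0) := by
    intro ℓ ℓ'; split_ifs <;> norm_num
  have key : (1:ℝ) ≤ Pval k - Tval G k j := by
    rw [Pval, Tval, ← Finset.sum_sub_distrib]
    rw [Finset.sum_congr rfl fun ℓ _ => (Finset.sum_sub_distrib
      (f := fun ℓ' => if ℓ < ℓ' then (1:ℝ) else 0)
      (g := fun ℓ' => if ℓ < ℓ' then (if G.Adj (j ℓ) (j ℓ') then (1:ℝ) else 0) else 0)).symm]
    have h1 : (1:ℝ) ≤ ∑ ℓ' : Fin k, ((if a < ℓ' then (1:ℝ) else 0)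
        - (if a < ℓ' then (if G.Adj (j a) (j ℓ') then (1:ℝ) else 0) else 0)) := by
      have := Finset.single_le_sum (f := fun ℓ' : Fin k => (if a < ℓ' then (1:ℝ) else 0)
        - (if a < ℓ' then (if G.Adj (j a) (j ℓ') then (1:ℝ) else 0) else 0))
        (fun ℓ' _ => hF a ℓ') (Finset.mem_univ b)
      simpa [hab, hnadj] using this
    refine le_trans h1 (Finset.single_le_sum
      (f := fun ℓ : Fin k => ∑ ℓ' : Fin k, ((if ℓ < ℓ' then (1:ℝ) else 0)
        - (if ℓ < ℓ' then (if G.Adj (j ℓ) (j ℓ') then (1:ℝ) else 0) else 0)))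
      (fun ℓ _ => Finset.sum_nonneg fun ℓ' _ => hF ℓ ℓ') (Finset.mem_univ a))
  linarith

lemma master (hk : 0 < k) (hreg : G.IsRegularOfDegree D) (y : EmbIdx k V → ℝ) :
    ∑ i, ∑ σ : EmbIdx k V, (Emb G k i (j i) σ - y σ)^2
      = 2*D*Pval k - (2*D*Pval k + 2*Tval G k j)/k
        + (k:ℝ) * ∑ σ : EmbIdx k V, (y σ - (∑ i, Emb G k i (j i) σ)/k)^2 := by
  have hk' : (k:ℝ) ≠ 0 := Nat.cast_ne_zero.2 hk.ne'
  rw [Finset.sum_comm]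
  have hsq : ∀ (i : Fin k) (v : V) (σ : EmbIdx k V), (Emb G k i v σ)^2 = Emb G k i v σ := by
    intro i v σ; simp only [Emb]; split_ifs <;> norm_num
  have hσ : ∀ σ : EmbIdx k V, ∑ i, (Emb G k i (j i) σ - y σ)^2
      = ((∑ i, Emb G k i (j i) σ) - (∑ i, Emb G k i (j i) σ)^2/k)
        + (k:ℝ) * (y σ - (∑ i, Emb G k i (j i) σ)/k)^2 := by
    intro σ
    have expand : ∀ i : Fin k, (Emb G k i (j i) σ - y σ)^2
        = Emb G k i (j i) σ - 2 * y σ * Emb G k i (j i) σ + y σ^2 := by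
      intro i
      have h := hsq i (j i) σ
      calc (Emb G k i (j i) σ - y σ)^2
          = (Emb G k i (j i) σ)^2 - 2 * y σ * Emb G k i (j i) σ + y σ^2 := by ring
        _ = _ := by rw [h]
    rw [Finset.sum_congr rfl fun i _ => expand i, Finset.sum_add_distrib,
      Finset.sum_sub_distrib, ← Finset.mul_sum, Finset.sum_const, Finset.card_univ,
      Fintype.card_fin, nsmul_eq_mul]
    field_simp
    ring
  rw [Finset.sum_congr rfl fun σ _ => hσ σ, Finset.sum_add_distrib, Finset.sum_sub_distrib,
    ← Finset.sum_div, sumS G k j hreg, sumS2 G k j hreg, ← Finset.mul_sum]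

lemma arith (Dr kr T Q δ : ℝ) (hk : 1 ≤ kr) (hT : T ≤ (kr^2 - kr)/2 - δ) (hQ : 0 ≤ Q) :
    Dr*(kr-1)^2 - kr + 1 + 2*δ/kr
      ≤ 2*Dr*((kr^2 - kr)/2) - (2*Dr*((kr^2 - kr)/2) + 2*T)/kr + kr*Q := by
  have hk0 : (0:ℝ) < kr := by linarith
  have hQ' : 0 ≤ kr * Q := mul_nonneg hk0.le hQ
  have heq : 2*Dr*((kr^2 - kr)/2) - (2*Dr*((kr^2 - kr)/2) + 2*((kr^2 - kr)/2 - δ))/kr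
      = Dr*(kr-1)^2 - kr + 1 + 2*δ/kr := by
    field_simp
    ring
  have hmono : (2*Dr*((kr^2 - kr)/2) + 2*T)/kr
      ≤ (2*Dr*((kr^2 - kr)/2) + 2*((kr^2 - kr)/2 - δ))/kr := by
    rw [div_le_div_iff_of_pos_right hk0]
    linarith
  linarith

end Aux

/-- Let M = D(k-1)². If G contains a k-clique, the minimum over tuples (j₁,…,j_k) ∈ V^k
    of min_y ∑ᵢ ‖φ(i,jᵢ) - y‖₂² equals M - k + 1; if G contains no k-clique, this
    minimum is at least M - k + 1 + 2/k. -/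
theorem stmt8 {V : Type*} [Fintype V] [DecidableEq V] (G : SimpleGraph V)
    [DecidableRel G.Adj] (n D k : ℕ) (hn : Fintype.card V = n)
    (hreg : G.IsRegularOfDegree D) (hk : 0 < k) :
    ((∃ s : Finset V, G.IsNClique k s) →
      IsLeast
        {c : ℝ | ∃ (j : Fin k → V) (y : EmbIdx k V → ℝ),
          c = ∑ i, ∑ σ : EmbIdx k V, (Emb G k i (j i) σ - y σ) ^ 2}
        ((D : ℝ) * ((k : ℝ) - 1) ^ 2 - (k : ℝ) + 1)) ∧
    ((¬ ∃ s : Finset V, G.IsNClique k s) →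
      ∀ (j : Fin k → V) (y : EmbIdx k V → ℝ),
        (D : ℝ) * ((k : ℝ) - 1) ^ 2 - (k : ℝ) + 1 + 2 / (k : ℝ)
          ≤ ∑ i, ∑ σ : EmbIdx k V, (Emb G k i (j i) σ - y σ) ^ 2) := by
  have hk1 : (1:ℝ) ≤ (k:ℝ) := by exact_mod_cast hk
  have hk0 : (0:ℝ) < (k:ℝ) := by linarith
  have hk' : (k:ℝ) ≠ 0 := ne_of_gt hk0
  constructor
  · rintro ⟨s, hs⟩
    constructor
    · -- membership
      have hcard : Fintype.card ↥s = k := by rw [Fintype.card_coe]; exact hs.2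
      set e : Fin k ≃ ↥s := (Fintype.equivFinOfCardEq hcard).symm with he
      set j : Fin k → V := fun i => ((e i : ↥s) : V) with hj
      have hadj : ∀ ℓ ℓ' : Fin k, ℓ < ℓ' → G.Adj (j ℓ) (j ℓ') := by
        intro ℓ ℓ' h
        refine hs.1 (e ℓ).2 (e ℓ').2 ?_
        intro hEq
        exact absurd (e.injective (Subtype.ext hEq)) (ne_of_lt h)
      refine ⟨j, fun σ => (∑ i, Emb G k i (j i) σ)/(k:ℝ), ?_⟩
      rw [master G k j hk hreg _]
      rw [Tval_eq_Pval G k j hadj, Pval_eq]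
      have hz : ∑ σ : EmbIdx k V,
          ((∑ i, Emb G k i (j i) σ)/(k:ℝ) - (∑ i, Emb G k i (j i) σ)/(k:ℝ))^2 = 0 := by
        simp
      rw [hz, mul_zero, add_zero]
      field_simp
      ring
    · rintro c ⟨j, y, rfl⟩
      rw [master G k j hk hreg y, Pval_eq]
      have hT : Tval G k j ≤ ((k:ℝ)^2 - (k:ℝ))/2 - 0 := by
        have := Tval_le_Pval G k j
        rw [Pval_eq] at this
        linarith
      have hQ : (0:ℝ) ≤ ∑ σ : EmbIdx k V, (y σ - (∑ i, Emb G k i (j i) σ)/(k:ℝ))^2 :=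
        Finset.sum_nonneg fun σ _ => sq_nonneg _
      have HA := arith (D:ℝ) (k:ℝ) (Tval G k j)
        (∑ σ : EmbIdx k V, (y σ - (∑ i, Emb G k i (j i) σ)/(k:ℝ))^2) 0 hk1 hT hQ
      rw [mul_zero, zero_div, add_zero] at HA
      exact HA
  · intro hnc j y
    have hpair : ∃ a b : Fin k, a < b ∧ ¬ G.Adj (j a) (j b) := by
      by_contra h
      push_neg at h
      apply hnc
      have hinj : Function.Injective j := by
        intro a b hab
        by_contra hne
        rcases lt_or_gt_of_ne hne with h' | h'
        · exact (G.ne_of_adj (h _ _ h')) hab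
        · exact (G.ne_of_adj (h _ _ h')) hab.symm
      refine ⟨Finset.univ.image j, ?_, ?_⟩
      · intro x hx y' hy' hxy
        simp only [Finset.coe_image, Finset.coe_univ, Set.image_univ, Set.mem_range] at hx hy'
        obtain ⟨a, rfl⟩ := hx
        obtain ⟨b, rfl⟩ := hy'
        have hne : a ≠ b := fun hE => hxy (by rw [hE])
        rcases lt_or_gt_of_ne hne with h' | h'
        · exact h _ _ h'
        · exact (h _ _ h').symm
      · rw [Finset.card_image_of_injective _ hinj, Finset.card_univ, Fintype.card_fin]
    obtain ⟨a, b, hab, hnadj⟩ := hpair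
    rw [master G k j hk hreg y]
    have hT : Tval G k j ≤ ((k:ℝ)^2 - (k:ℝ))/2 - 1 := by
      have := Tval_le_sub G k j a b hab hnadj
      rw [Pval_eq] at this
      linarith
    have hQ : (0:ℝ) ≤ ∑ σ : EmbIdx k V, (y σ - (∑ i, Emb G k i (j i) σ)/(k:ℝ))^2 :=
      Finset.sum_nonneg fun σ _ => sq_nonneg _
    have HA := arith (D:ℝ) (k:ℝ) (Tval G k j)
      (∑ σ : EmbIdx k V, (y σ - (∑ i, Emb G k i (j i) σ)/(k:ℝ))^2) 1 hk1 hT hQ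
    rw [Pval_eq]
    calc (D:ℝ) * ((k:ℝ) - 1)^2 - (k:ℝ) + 1 + 2/(k:ℝ)
        = (D:ℝ)*((k:ℝ)-1)^2 - (k:ℝ) + 1 + 2*1/(k:ℝ) := by ring
      _ ≤ _ := HA
end

section
/- Let G = (V,E) be a D-regular n-vertex graph and v_1, …, v_k ∈ V (not necessarily distinct). Then the vectors φ(1,v_1), …, φ(k,v_k) given by the edge-indicator embedding form a (k, D(k-1), t)-collection with t = |E(v_1,…,v_k)|: each vector has exactly D(k-1) nonzero entries, exactly t pairs of vectors share exactly one nonzero entry (inner product 1), the remaining C(k,2) - t pairs have disjoint supports (inner product 0), and every coordinate is nonzero in at most two of the vectors. -/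
open scoped Classical

/-- A (k,s,t)-collection: k vectors in {0,1}^ι such that each has exactly s nonzero
    entries, exactly t pairs share exactly one nonzero entry (inner product 1), the
    other C(k,2) - t pairs have disjoint supports (inner product 0), and every
    coordinate is nonzero in at most two of the vectors. -/
noncomputable def IsKSTCollection {ι : Type*} [Fintype ι] {k : ℕ}
    (x : Fin k → ι → ℝ) (s t : ℕ) : Prop :=
  (∀ i, (Finset.univ.filter (fun j : ι => x i j ≠ 0)).card = s) ∧
  (Finset.univ.filter (fun pr : Fin k × Fin k =>
      pr.1 < pr.2 ∧ ∑ j, x pr.1 j * x pr.2 j = 1)).card = t ∧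
  (Finset.univ.filter (fun pr : Fin k × Fin k =>
      pr.1 < pr.2 ∧ ∑ j, x pr.1 j * x pr.2 j = 0)).card = k.choose 2 - t ∧
  (∀ j : ι, (Finset.univ.filter (fun i : Fin k => x i j ≠ 0)).card ≤ 2)

open Finset SimpleGraph

theorem isKSTCollection_of_inner_eq_ite {ι : Type*} [Fintype ι] {k : ℕ} (x : Fin k → ι → ℝ)
    (s : ℕ) (P : Fin k → Fin k → Prop) [DecidableRel P]
    (hsupp : ∀ i, #{j | x i j ≠ 0} = s)
    (hinner : ∀ i j, i < j → ∑ l, x i l * x j l = if P i j then 1 else 0)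
    (hcol : ∀ l, #{i | x i l ≠ 0} ≤ 2) :
    IsKSTCollection x s #{pr : Fin k × Fin k | pr.1 < pr.2 ∧ P pr.1 pr.2} := by
  have hsplit := card_filter_add_card_filter_not (s := {pr : Fin k × Fin k | pr.1 < pr.2})
    (p := fun pr => P pr.1 pr.2)
  rw [Fintype.card_product_filter_lt, Fintype.card_fin, filter_filter, filter_filter] at hsplit
  have hone : ∀ pr : Fin k × Fin k, pr.1 < pr.2 →
      (∑ l, x pr.1 l * x pr.2 l = 1 ↔ P pr.1 pr.2) := fun pr hlt => by
    rw [hinner _ _ hlt]; split_ifs with h <;> simp [h]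
  have hzero : ∀ pr : Fin k × Fin k, pr.1 < pr.2 →
      (∑ l, x pr.1 l * x pr.2 l = 0 ↔ ¬P pr.1 pr.2) := fun pr hlt => by
    rw [hinner _ _ hlt]; split_ifs with h <;> simp [h]
  refine ⟨hsupp, congrArg card (filter_congr fun pr _ => and_congr_right (hone pr)), ?_, hcol⟩
  rw [← hsplit, Nat.add_sub_cancel_left]
  exact congrArg card (filter_congr fun pr _ => and_congr_right (hzero pr))

section
variable {V : Type*} [DecidableEq V] (G : SimpleGraph V) [DecidableRel G.Adj] {k : ℕ}

theorem emb_ne_zero_iff (i : Fin k) (w : V) (σ : EmbIdx k V) :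
    Emb G k i w σ ≠ 0 ↔
      G.Adj σ.1.2.1 σ.1.2.2.2 ∧ ((σ.1.1, σ.1.2.1) = (i, w) ∨ (σ.1.2.2.1, σ.1.2.2.2) = (i, w)) := by
  unfold Emb
  split_ifs with h <;> simpa using h

theorem emb_mul_emb {i j : Fin k} (hij : i < j) (a b : V) (σ : EmbIdx k V) :
    Emb G k i a σ * Emb G k j b σ = if σ = ⟨(i, a, j, b), hij⟩ ∧ G.Adj a b then 1 else 0 := by
  obtain ⟨⟨ℓ, u, ℓ', u'⟩, hlt⟩ := σ
  simp only [Emb, Subtype.mk.injEq, Prod.mk.injEq]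
  split_ifs <;> grind

theorem sum_emb_mul_emb [Fintype V] {i j : Fin k} (hij : i < j) (a b : V) :
    ∑ σ, Emb G k i a σ * Emb G k j b σ = if G.Adj a b then 1 else 0 := by
  simp_rw [emb_mul_emb G hij, ite_and]
  simp

theorem card_filter_emb_ne_zero_le_two (v : Fin k → V) (σ : EmbIdx k V) :
    #{i | Emb G k i (v i) σ ≠ 0} ≤ 2 := by
  have : ({i | Emb G k i (v i) σ ≠ 0} : Finset (Fin k)) ⊆ {σ.1.1, σ.1.2.2.1} := by
    intro i hi
    simp only [mem_filter, emb_ne_zero_iff, Prod.ext_iff] at hi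
    grind
  exact (card_le_card this).trans card_le_two

theorem card_filter_emb_ne_zero [Fintype V] (i : Fin k) (w : V) :
    #{σ : EmbIdx k V | Emb G k i w σ ≠ 0} = #(G.neighborFinset w ×ˢ univ.erase i) := by
  refine card_bij' (fun σ _ => if σ.1.1 = i then (σ.1.2.2.2, σ.1.2.2.1) else (σ.1.2.1, σ.1.1))
    (fun a ha => if h : i < a.2 then ⟨(i, w, a.2, a.1), h⟩
      else ⟨(a.2, a.1, i, w), show a.2 < i by simp at ha; omega⟩) ?_ ?_ ?_ ?_
  · rintro ⟨⟨ℓ, u, ℓ', u'⟩, hlt⟩ hσ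
    simp only [mem_filter, emb_ne_zero_iff, Prod.ext_iff] at hσ
    simp only [mem_product, mem_neighborFinset, mem_erase, ne_eq, mem_univ, and_true]
    grind [G.adj_symm]
  · rintro ⟨u', j⟩ ha
    simp only [mem_product, mem_neighborFinset, mem_erase] at ha
    split_ifs with h
    · simp [emb_ne_zero_iff, ha.1]
    · simp [emb_ne_zero_iff, ha.1.symm]
  · rintro ⟨⟨ℓ, u, ℓ', u'⟩, hlt⟩ hσ
    simp only [mem_filter, emb_ne_zero_iff, Prod.ext_iff] at hσ
    grind
  · rintro ⟨u', j⟩ ha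
    simp only [mem_product, mem_neighborFinset, mem_erase] at ha
    grind

theorem card_filter_emb_ne_zero_of_isRegularOfDegree [Fintype V] {D : ℕ}
    (hreg : G.IsRegularOfDegree D) (i : Fin k) (w : V) :
    #{σ : EmbIdx k V | Emb G k i w σ ≠ 0} = D * (k - 1) := by
  rw [card_filter_emb_ne_zero, card_product, card_neighborFinset_eq_degree, hreg w,
    card_erase_of_mem (mem_univ i), card_univ, Fintype.card_fin]

end

theorem stmt10_general {V : Type*} [Fintype V] [DecidableEq V] (G : SimpleGraph V)
    [DecidableRel G.Adj] (D k : ℕ)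
    (hreg : G.IsRegularOfDegree D) (v : Fin k → V) :
    IsKSTCollection (fun i => Emb G k i (v i)) (D * (k - 1))
      (∑ pr ∈ Finset.univ.filter (fun pr : Fin k × Fin k => pr.1 < pr.2),
        (if G.Adj (v pr.1) (v pr.2) then (1 : ℕ) else 0)) := by
  rw [sum_boole, filter_filter]
  exact isKSTCollection_of_inner_eq_ite _ _ (fun i j => G.Adj (v i) (v j))
    (fun i => card_filter_emb_ne_zero_of_isRegularOfDegree G hreg i (v i))
    (fun i j hij => sum_emb_mul_emb G hij (v i) (v j))
    (card_filter_emb_ne_zero_le_two G v)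

/-- For a D-regular n-vertex graph G and vertices v₁, …, v_k (not necessarily distinct),
    the embedded vectors φ(1,v₁), …, φ(k,v_k) form a (k, D(k-1), |E(v₁,…,v_k)|)-collection. -/
theorem stmt10 {V : Type*} [Fintype V] [DecidableEq V] (G : SimpleGraph V)
    [DecidableRel G.Adj] (n D k : ℕ) (hn : Fintype.card V = n)
    (hreg : G.IsRegularOfDegree D) (hk : 0 < k) (v : Fin k → V) :
    IsKSTCollection (fun i => Emb G k i (v i)) (D * (k - 1))
      (∑ pr ∈ Finset.univ.filter (fun pr : Fin k × Fin k => pr.1 < pr.2),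
        (if G.Adj (v pr.1) (v pr.2) then (1 : ℕ) else 0)) :=
  stmt10_general G D k hreg v
end

section
/- Let n ≥ 3, p ∈ [1,∞), and let ξ be the embedding for the q = ∞ case of a graph G = (V,E) on n vertices: coordinates indexed by (ℓ,u,ℓ',u') with ℓ < ℓ' ∈ [k], u,u' ∈ V, with [ξ(i,v)]_{(ℓ,u,ℓ',u')} = 0 if (i,v) ∉ {(ℓ,u),(ℓ',u')}, = 1 if (i,v) = (ℓ',u'), = 1 if (i,v) = (ℓ,u) and (u,u') ∈ E, and = −1 if (i,v) = (ℓ,u) and (u,u') ∉ E. If vertices v_1, …, v_k form a k-clique in G, then min over y of ∑_{i=1}^k ‖ξ(i,v_i) − y‖_∞^p ≤ k/2^p. -/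
/-- The q = ∞ embedding ξ of a graph G: [ξ(i,v)]_{(ℓ,u,ℓ',u')} equals 0 if
    (i,v) ∉ {(ℓ,u),(ℓ',u')}; 1 if (i,v) = (ℓ',u'); 1 if (i,v) = (ℓ,u) and
    (u,u') ∈ E; and -1 if (i,v) = (ℓ,u) and (u,u') ∉ E. -/
def Xi {V : Type*} (G : SimpleGraph V) [DecidableRel G.Adj] [DecidableEq V]
    (k : ℕ) (i : Fin k) (v : V) : EmbIdx k V → ℝ :=
  fun σ =>
    if (σ.1.1, σ.1.2.1) = (i, v) then
      (if G.Adj σ.1.2.1 σ.1.2.2.2 then 1 else -1)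
    else if (σ.1.2.2.1, σ.1.2.2.2) = (i, v) then 1 else 0

/-- The sup norm (ℓ_∞ norm). -/
noncomputable def linfNorm {ι : Type*} (x : ι → ℝ) : ℝ := ⨆ j, |x j|

/-- If v₁, …, v_k form a k-clique in G (n ≥ 3 vertices), then
    min_y ∑ᵢ ‖ξ(i,vᵢ) - y‖_∞^p ≤ k/2^p. -/
theorem stmt16 {V : Type*} [Fintype V] [DecidableEq V] (G : SimpleGraph V)
    [DecidableRel G.Adj] (n k : ℕ) (hn : Fintype.card V = n) (hn3 : 3 ≤ n)
    (p : ℝ) (hp : 1 ≤ p) (v : Fin k → V) (hinj : Function.Injective v)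
    (hclique : ∀ i i' : Fin k, i ≠ i' → G.Adj (v i) (v i')) :
    (⨅ y : EmbIdx k V → ℝ, ∑ i, linfNorm (fun σ => Xi G k i (v i) σ - y σ) ^ p)
      ≤ (k : ℝ) / 2 ^ p := by
  classical
  set y : EmbIdx k V → ℝ := fun σ =>
    if σ.1.2.1 = v σ.1.1 then (if G.Adj σ.1.2.1 σ.1.2.2.2 then (1:ℝ)/2 else -(1/2))
    else if σ.1.2.2.2 = v σ.1.2.2.1 then 1/2 else 0 with hy
  have hbound : ∀ (i : Fin k) (σ : EmbIdx k V), |Xi G k i (v i) σ - y σ| ≤ 1/2 := by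
    rintro i ⟨⟨l, u, l', u'⟩, hlt⟩
    have hlt' : l < l' := hlt
    simp only [Xi, hy]
    by_cases h1 : (l, u) = ((i : Fin k), v i)
    · obtain ⟨hl, hu⟩ := Prod.mk.injEq .. ▸ h1
      have hC : u = v l := by rw [hu, hl]
      rw [if_pos h1, if_pos hC]
      by_cases hadj : G.Adj u u'
      · rw [if_pos hadj, if_pos hadj]; rw [abs_le]; constructor <;> norm_num
      · rw [if_neg hadj, if_neg hadj]; rw [abs_le]; constructor <;> norm_num
    · by_cases h2 : (l', u') = ((i : Fin k), v i)
      · obtain ⟨hl', hu'⟩ := Prod.mk.injEq .. ▸ h2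
        have hD : u' = v l' := by rw [hu', hl']
        rw [if_neg h1, if_pos h2]
        by_cases hC : u = v l
        · have hne : l ≠ i := hl' ▸ ne_of_lt hlt'
          have hadj : G.Adj u u' := by rw [hC, hu']; exact hclique l i hne
          rw [if_pos hC, if_pos hadj]; rw [abs_le]; constructor <;> norm_num
        · rw [if_neg hC, if_pos hD]; rw [abs_le]; constructor <;> norm_num
      · rw [if_neg h1, if_neg h2]
        by_cases hC : u = v l
        · by_cases hadj : G.Adj u u'
          · rw [if_pos hC, if_pos hadj]; rw [abs_le]; constructor <;> norm_num
          · rw [if_pos hC, if_neg hadj]; rw [abs_le]; constructor <;> norm_num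
        · by_cases hD : u' = v l'
          · rw [if_neg hC, if_pos hD]; rw [abs_le]; constructor <;> norm_num
          · rw [if_neg hC, if_neg hD]; rw [abs_le]; constructor <;> norm_num
  have hnn : ∀ (i : Fin k), 0 ≤ linfNorm (fun σ => Xi G k i (v i) σ - y σ) :=
    fun i => Real.iSup_nonneg fun σ => abs_nonneg _
  have hle : ∀ (i : Fin k), linfNorm (fun σ => Xi G k i (v i) σ - y σ) ≤ 1/2 :=
    fun i => Real.iSup_le (fun σ => hbound i σ) (by norm_num)
  have hp0 : (0:ℝ) ≤ p := le_trans zero_le_one hp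
  have key : ∑ i, linfNorm (fun σ => Xi G k i (v i) σ - y σ) ^ p ≤ (k:ℝ)/2^p := by
    calc ∑ i, linfNorm (fun σ => Xi G k i (v i) σ - y σ) ^ p
        ≤ ∑ _i : Fin k, ((1:ℝ)/2) ^ p :=
          Finset.sum_le_sum fun i _ => Real.rpow_le_rpow (hnn i) (hle i) hp0
      _ = (k:ℝ) * ((1:ℝ)/2) ^ p := by
          simp [Finset.sum_const, mul_comm]
      _ = (k:ℝ)/2^p := by
          rw [Real.div_rpow (by norm_num) (by norm_num), Real.one_rpow]; ring
  refine le_trans (ciInf_le ?_ y) key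
  refine ⟨0, ?_⟩
  rintro x ⟨y', rfl⟩
  exact Finset.sum_nonneg fun i _ =>
    Real.rpow_nonneg (Real.iSup_nonneg fun σ => abs_nonneg _) p
end
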